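/- arXiv:1302.2116 — 4 statements merged into one kernel-verified Lean document; each statement's English description precedes it below -/
import Mathlib

section
/- The composition of two functions of skew-product type is of skew-product type: if (f_0,…,f_k) and (g_0,…,g_k) are skew-product tuples with f_i : ∏_{j≤i} B_j^{[i]^(j)} → A_i and g_i : ∏_{j≤i} A_j^{[i]^(j)} → C_i, then ĝ ∘ f̂ is the function of skew-product type associated to the tuple h_i((x_a)_{a ⊆ [i]}) := g_i((f_{|a|}((x_b)_{b ⊆ a}))_{a ⊆ [i]}). -/
universe u

/-- Restrict an assignment `x` of a value in `B |e|` to each subset `e ⊆ [k]` to the subsets of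
a fixed `e`, reindexed along the order isomorphism `Fin e.card ≃o e`. -/
def restrictSub {B : ℕ → Type u} {k : ℕ} (x : ∀ e : Finset (Fin k), B e.card)
    (e : Finset (Fin k)) (a : Finset (Fin e.card)) : B a.card :=
  cast (congrArg B (Finset.card_map _)) (x (a.map (e.orderEmbOfFin rfl).toEmbedding))

/-- The function of skew-product type `f̂` associated to a skew-product tuple
`f_i : ∏_{j ≤ i} B_j^{[i]^(j)} → A_i`:  `f̂((x_e)_{e ⊆ [k]}) = (f_{|e|}((x_a)_{a ⊆ e}))_{e ⊆ [k]}`. -/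
def skewHat {B A : ℕ → Type u} {k : ℕ}
    (f : ∀ i : ℕ, (∀ a : Finset (Fin i), B a.card) → A i)
    (x : ∀ e : Finset (Fin k), B e.card) : ∀ e : Finset (Fin k), A e.card :=
  fun e => f e.card (restrictSub x e)

/-- A skew-product tuple is middle-symmetric if each `f_i` is invariant under the simultaneous
action of any permutation of `[i]` on all the coordinate indices. -/
def MidSymmetric {B : ℕ → Type u} {A : ℕ → Type u}
    (f : ∀ i : ℕ, (∀ a : Finset (Fin i), B a.card) → A i) : Prop :=
  ∀ (i : ℕ) (σ : Equiv.Perm (Fin i)) (x : ∀ a : Finset (Fin i), B a.card),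
    f i (fun a => cast (congrArg B (Finset.card_map _)) (x (a.map σ.toEmbedding))) = f i x

/-!
Restricting to `e ⊆ [k]` is pulling back along the order embedding `[|e|] ↪o [k]` onto `e`, and
pullback is functorial. The composite `[|a|] ↪o [|e|] ↪o [k]` is again an order embedding, hence
the canonical one onto the image of `a` in `[k]`; so restricting `f̂ x` to `e` and then evaluating
at `a` agrees with applying `f` to the restriction of the restriction of `x`.
-/

section
variable {B A : ℕ → Type u} {k : ℕ}

def restrictAlong (x : ∀ e : Finset (Fin k), B e.card) {m : ℕ} (φ : Fin m ↪ Fin k)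
    (a : Finset (Fin m)) : B a.card :=
  cast (congrArg B (Finset.card_map _)) (x (a.map φ))

theorem restrictAlong_restrictAlong (x : ∀ e : Finset (Fin k), B e.card) {m n : ℕ}
    (φ : Fin m ↪ Fin k) (ψ : Fin n ↪ Fin m) :
    restrictAlong (restrictAlong x φ) ψ = restrictAlong x (ψ.trans φ) := by
  funext a
  simp only [restrictAlong, cast_cast]
  rw [← heq_iff_eq]
  exact (cast_heq _ _).trans ((congr_arg_heq x (a.map_map ψ φ)).trans (cast_heq _ _).symm)

theorem cast_skewHat_apply (f : ∀ i : ℕ, (∀ a : Finset (Fin i), B a.card) → A i)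
    (x : ∀ e : Finset (Fin k), B e.card) (s : Finset (Fin k)) {n : ℕ} (h : s.card = n) :
    cast (congrArg A h) (skewHat f x s) = f n (restrictAlong x (s.orderEmbOfFin h).toEmbedding) := by
  subst h
  rfl

end

theorem Finset.orderEmbOfFin_trans_orderEmbOfFin {k : ℕ} (e : Finset (Fin k))
    (a : Finset (Fin e.card)) :
    (a.orderEmbOfFin rfl).trans (e.orderEmbOfFin rfl)
      = (a.map (e.orderEmbOfFin rfl).toEmbedding).orderEmbOfFin (Finset.card_map _) :=
  Finset.orderEmbOfFin_unique' _ fun i =>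
    Finset.mem_map_of_mem _ (a.orderEmbOfFin_mem rfl i)

theorem skewHat_comp_general {B A C : ℕ → Type u} {k : ℕ}
    (f : ∀ i : ℕ, (∀ a : Finset (Fin i), B a.card) → A i)
    (g : ∀ i : ℕ, (∀ a : Finset (Fin i), A a.card) → C i) :
    (skewHat (k := k) g) ∘ (skewHat (k := k) f)
      = skewHat (k := k) (fun i x => g i (skewHat (k := i) f x)) := by
  funext x e
  show g e.card (restrictSub (skewHat f x) e) = g e.card (skewHat f (restrictSub x e))
  congr 1
  funext a
  calc restrictSub (skewHat f x) e a
      = f a.card (restrictAlong x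
          ((a.map (e.orderEmbOfFin rfl).toEmbedding).orderEmbOfFin (Finset.card_map _)).toEmbedding) :=
        cast_skewHat_apply f x _ _
    _ = f a.card (restrictAlong (restrictAlong x (e.orderEmbOfFin rfl).toEmbedding)
          (a.orderEmbOfFin rfl).toEmbedding) := by
        rw [restrictAlong_restrictAlong, ← e.orderEmbOfFin_trans_orderEmbOfFin a]
        rfl

/-- The composition of two functions of skew-product type is of skew-product type: if
`(f_0,…,f_k)` and `(g_0,…,g_k)` are middle-symmetric skew-product tuples, then `ĝ ∘ f̂` is the
function of skew-product type associated to the tuple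
`h_i((x_a)_{a ⊆ [i]}) := g_i((f_{|a|}((x_b)_{b ⊆ a}))_{a ⊆ [i]})`. -/
theorem skewHat_comp {B A C : ℕ → Type u} {k : ℕ}
    (f : ∀ i : ℕ, (∀ a : Finset (Fin i), B a.card) → A i)
    (g : ∀ i : ℕ, (∀ a : Finset (Fin i), A a.card) → C i)
    (hf : MidSymmetric f) (hg : MidSymmetric g) :
    (skewHat (k := k) g) ∘ (skewHat (k := k) f)
      = skewHat (k := k) (fun i x => g i (skewHat (k := i) f x)) :=
  skewHat_comp_general f g
end

section
/- Noise-Outsourcing Lemma: let A and B be standard Borel spaces and (X,Y) an (A×B)-valued random variable. Then, possibly after enlarging the probability space, there exist a random variable U uniform on [0,1) independent of X and a Borel function f : A × [0,1) → B such that (X,Y) = (X, f(X,U)) almost surely. -/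
/-!
Disintegrate the law of `(X, Y)` as `law(X) ⊗ₘ κ` with `κ = condDistrib Y X P`. Since `B` is
standard Borel, `κ` is represented by a jointly measurable `f : A → I → B` with
`volume.map (f a) = κ a`, and since `A` is standard Borel, `law(X)` is the image of `volume`
under some `g : I → A`. On `I × I` with the product of uniform measures, `X' = g ∘ fst` and
`U = snd` are independent, and `(X', f X' U)` has law `law(X) ⊗ₘ κ = law(X, Y)`.
-/

open MeasureTheory ProbabilityTheory Set unitInterval Function

theorem unitInterval.map_coe_volume :
    (volume : Measure I).map Subtype.val = volume.restrict (Ico 0 1) := by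
  rw [measurePreserving_coe.map_eq]
  exact Measure.restrict_congr_set Ico_ae_eq_Icc.symm

theorem MeasureTheory.Measure.map_prod_eq_compProd {α β γ : Type*} [MeasurableSpace α]
    [MeasurableSpace β] [MeasurableSpace γ] (μ : Measure α) [SFinite μ] (ν : Measure γ)
    [SFinite ν] {κ : Kernel α β} [IsSFiniteKernel κ] {f : α → γ → β}
    (hf : Measurable (uncurry f)) (hfκ : ∀ a, ν.map (f a) = κ a) :
    (μ.prod ν).map (fun p ↦ (p.1, f p.1 p.2)) = μ ⊗ₘ κ := by
  ext s hs
  have hg : Measurable fun p : α × γ ↦ (p.1, f p.1 p.2) := measurable_fst.prodMk hf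
  rw [Measure.map_apply hg hs, Measure.prod_apply (hg hs), Measure.compProd_apply hs]
  refine lintegral_congr fun a ↦ ?_
  rw [← hfκ a, Measure.map_apply hf.of_uncurry_left (measurable_prodMk_left hs)]
  rfl

/-- Noise-Outsourcing Lemma: if `A` and `B` are standard Borel spaces and `(X,Y)` is an
`(A × B)`-valued random variable, then (possibly after enlarging the probability space) there
are a uniform-`[0,1)` random variable `U` independent of `X` and a Borel function
`f : A × [0,1) → B` such that `(X,Y) = (X, f(X,U))` almost surely.  The enlargement is
expressed by a new probability space carrying a copy `(X',Y')` of `(X,Y)`. -/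
theorem noise_outsourcing {Ω A B : Type*} [MeasurableSpace Ω]
    [MeasurableSpace A] [StandardBorelSpace A]
    [MeasurableSpace B] [StandardBorelSpace B] [Nonempty B]
    (P : Measure Ω) [IsProbabilityMeasure P]
    (X : Ω → A) (Y : Ω → B) (hX : Measurable X) (hY : Measurable Y) :
    ∃ (Ω' : Type) (_ : MeasurableSpace Ω') (P' : Measure Ω')
      (_ : IsProbabilityMeasure P')
      (X' : Ω' → A) (Y' : Ω' → B) (U : Ω' → ℝ) (f : A → ℝ → B),
      Measurable X' ∧ Measurable Y' ∧ Measurable U ∧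
      Measurable (Function.uncurry f) ∧
      P'.map U = volume.restrict (Set.Ico (0:ℝ) 1) ∧
      IndepFun X' U P' ∧
      P'.map (fun ω => (X' ω, Y' ω)) = P.map (fun ω => (X ω, Y ω)) ∧
      ∀ᵐ ω ∂P', Y' ω = f (X' ω) (U ω) := by
  have : Nonempty A := (nonempty_of_isProbabilityMeasure P).map X
  have : IsProbabilityMeasure (P.map X) := Measure.isProbabilityMeasure_map hX.aemeasurable
  obtain ⟨g, hg, hgX⟩ := (P.map X).exists_measurable_map_eq
  obtain ⟨f, hf, hfκ⟩ := (condDistrib Y X P).exists_measurable_map_eq_unitInterval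
  have hproj : Measurable (projIcc (0 : ℝ) 1 zero_le_one) := continuous_projIcc.measurable
  refine ⟨I × I, inferInstance, volume, inferInstance, fun ω ↦ g ω.1, fun ω ↦ f (g ω.1) ω.2,
    fun ω ↦ ω.2, fun a u ↦ f a (projIcc 0 1 zero_le_one u), by fun_prop, by fun_prop,
    by fun_prop, hf.comp (measurable_fst.prodMk (hproj.comp measurable_snd)), ?_,
    indepFun_prod hg measurable_subtype_coe, ?_, .of_forall fun ω ↦ by simp⟩
  · calc (volume : Measure (I × I)).map (fun ω ↦ (ω.2 : ℝ))
        = ((volume.prod volume).map Prod.snd).map Subtype.val :=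
          (Measure.map_map measurable_subtype_coe measurable_snd).symm
      _ = volume.restrict (Ico 0 1) := by
          rw [Measure.map_snd_prod, measure_univ, one_smul, map_coe_volume]
  · calc (volume : Measure (I × I)).map (fun ω ↦ (g ω.1, f (g ω.1) ω.2))
        = ((volume.prod volume).map (Prod.map g id)).map (fun p ↦ (p.1, f p.1 p.2)) :=
          (Measure.map_map (measurable_fst.prodMk hf) (hg.prodMap measurable_id)).symm
      _ = P.map X ⊗ₘ condDistrib Y X P := by
          rw [← Measure.map_prod_map _ _ hg measurable_id, hgX, Measure.map_id,
            Measure.map_prod_eq_compProd _ _ hf hfκ]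
      _ = P.map fun ω ↦ (X ω, Y ω) := compProd_map_condDistrib hY.aemeasurable
end

section
/- Factorization of measure-preserving skew-product maps (k = 0 case): if G_0 : [0,1) → [0,1) is a Borel map pushing Lebesgue measure to Lebesgue measure, then there exists a Borel map H_0 : [0,1)×[0,1) → [0,1) such that if (X,Y) are independent and uniform on [0,1), then H_0(X,Y) is uniform on [0,1) and G_0(H_0(X,Y)) = X almost surely. -/
open MeasureTheory

/-- The uniform probability measure on `[0,1) ⊆ ℝ`. -/
noncomputable def unif01 : Measure ℝ := volume.restrict (Set.Ico (0:ℝ) 1)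

/-!
Let `ρ` be the law of `(G₀ Z, Z)` with `Z` uniform; since `G₀` preserves `unif01`, the first
marginal of `ρ` is `unif01`. Disintegrate `ρ` along its first coordinate and realise each
conditional law as the image of one uniform variable under a map depending measurably on the
condition (Kallenberg, Lemma 4.22). This gives `H₀` with `(X, H₀ (X, Y)) ∼ ρ`, and both claims
are properties of `ρ`: its second marginal is `unif01` and it is carried by the graph of `G₀`.
-/

open Set ProbabilityTheory unitInterval

instance : IsProbabilityMeasure unif01 :=
  ⟨by rw [unif01, Measure.restrict_apply_univ, Real.volume_Ico]; norm_num⟩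

lemma map_coe_unitInterval_volume : (volume : Measure I).map Subtype.val = unif01 := by
  rw [measurePreserving_coe.map_eq, unif01]
  exact Measure.restrict_congr_set Ico_ae_eq_Icc.symm

lemma unif01_map_projIcc : unif01.map (projIcc 0 1 zero_le_one) = (volume : Measure I) := by
  rw [← map_coe_unitInterval_volume, Measure.map_map continuous_projIcc.measurable
    measurable_subtype_coe]
  simp [Function.comp_def, projIcc_val]

lemma MeasureTheory.Measure.map_prodMk_fst_eq_compProd {α β γ : Type*} [MeasurableSpace α]
    [MeasurableSpace β] [MeasurableSpace γ] (μ : Measure α) [SFinite μ] (ν : Measure β)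
    [SFinite ν] (κ : Kernel α γ) [IsSFiniteKernel κ] {H : α × β → γ} (hH : Measurable H)
    (hκ : ∀ a, ν.map (fun b ↦ H (a, b)) = κ a) :
    (μ.prod ν).map (fun p ↦ (p.1, H p)) = μ ⊗ₘ κ := by
  have hm : Measurable fun p : α × β ↦ (p.1, H p) := measurable_fst.prodMk hH
  ext s hs
  rw [Measure.map_apply hm hs, Measure.prod_apply (hm hs), Measure.compProd_apply hs]
  refine lintegral_congr fun a ↦ ?_
  rw [← hκ a, Measure.map_apply (by fun_prop) (measurable_prodMk_left hs)]
  rfl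

theorem MeasureTheory.Measure.exists_measurable_map_prod_unif01_eq {α Ω : Type*}
    [MeasurableSpace α] [MeasurableSpace Ω] [StandardBorelSpace Ω] [Nonempty Ω]
    (ρ : Measure (α × Ω)) [IsFiniteMeasure ρ] :
    ∃ H : α × ℝ → Ω, Measurable H ∧ (ρ.fst.prod unif01).map (fun p ↦ (p.1, H p)) = ρ := by
  obtain ⟨f, hf, hfκ⟩ := ρ.condKernel.exists_measurable_map_eq_unitInterval
  refine ⟨fun p ↦ f p.1 (projIcc 0 1 zero_le_one p.2), by fun_prop, ?_⟩
  conv_rhs => rw [← ρ.disintegrate ρ.condKernel]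
  refine Measure.map_prodMk_fst_eq_compProd _ _ _ (by fun_prop) fun a ↦ ?_
  rw [← hfκ a, ← unif01_map_projIcc, Measure.map_map (by fun_prop) continuous_projIcc.measurable]
  rfl

theorem factorization_base_case_general (G₀ : ℝ → ℝ) (hG₀ : Measurable G₀)
    (hG₀mp : unif01.map G₀ = unif01) :
    ∃ H₀ : ℝ × ℝ → ℝ, Measurable H₀ ∧
      (unif01.prod unif01).map H₀ = unif01 ∧
      ∀ᵐ p ∂(unif01.prod unif01), G₀ (H₀ p) = p.1 := by
  have hpair : Measurable fun z ↦ (G₀ z, z) := hG₀.prodMk measurable_id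
  have hρ_fst : (unif01.map fun z ↦ (G₀ z, z)).fst = unif01 := by
    rw [Measure.fst_map_prodMk (Y := fun z ↦ z) measurable_id, hG₀mp]
  obtain ⟨H, hH, hHρ⟩ := (unif01.map fun z ↦ (G₀ z, z)).exists_measurable_map_prod_unif01_eq
  rw [hρ_fst] at hHρ
  refine ⟨H, hH, ?_, ?_⟩
  · calc (unif01.prod unif01).map H = ((unif01.prod unif01).map fun p ↦ (p.1, H p)).snd :=
          (Measure.snd_map_prodMk measurable_fst).symm
      _ = unif01 := by rw [hHρ, Measure.snd_map_prodMk hG₀, Measure.map_id']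
  · have hρ_graph : ∀ᵐ q ∂(unif01.map fun z ↦ (G₀ z, z)), G₀ q.2 = q.1 :=
      (ae_map_iff hpair.aemeasurable
        (measurableSet_eq_fun (hG₀.comp measurable_snd) measurable_fst)).2 (ae_of_all _ fun _ ↦ rfl)
    rw [← hHρ] at hρ_graph
    exact ae_of_ae_map (measurable_fst.prodMk hH).aemeasurable hρ_graph

/-- Factorization of measure-preserving maps (`k = 0` case of the skew-product factorization):
if `G₀ : [0,1) → [0,1)` is Borel and pushes Lebesgue measure to Lebesgue measure, then there is
a Borel map `H₀ : [0,1) × [0,1) → [0,1)` such that for `(X,Y)` independent uniform on `[0,1)`,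
`H₀(X,Y)` is uniform on `[0,1)` and `G₀(H₀(X,Y)) = X` almost surely. -/
theorem factorization_base_case (G₀ : ℝ → ℝ) (hG₀ : Measurable G₀)
    (hG₀range : ∀ x ∈ Set.Ico (0:ℝ) 1, G₀ x ∈ Set.Ico (0:ℝ) 1)
    (hG₀mp : unif01.map G₀ = unif01) :
    ∃ H₀ : ℝ × ℝ → ℝ, Measurable H₀ ∧
      (unif01.prod unif01).map H₀ = unif01 ∧
      ∀ᵐ p ∂(unif01.prod unif01), G₀ (H₀ p) = p.1 :=
  factorization_base_case_general G₀ hG₀ hG₀mp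
end

section
/- Derivation of an ERM from a row-column exchangeable array via de Finetti: let (X_{i,n})_{(i,n)∈ℕ²} be a row-column exchangeable array valued in a standard Borel space A, i.e. (X_{σ(i),τ(n)})_{i,n} =^law (X_{i,n})_{i,n} for all finitely supported permutations σ, τ. Viewing ((X_{i,n})_i)_n as an exchangeable sequence of A^ℕ-valued random variables, let 𝛍 be its de Finetti directing random measure on A^ℕ (so that law(((X_{i,n})_i)_n) = E[𝛍^{⊗ℕ}]). Then 𝛍 is an exchangeable random measure: (T^σ)_*𝛍 =^law 𝛍 for every finitely supported permutation σ, where T^σ permutes the coordinates of A^ℕ. -/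
open MeasureTheory

/-- A permutation of `ℕ` is finitely supported if it fixes all but finitely many elements. -/
def FinitelySupported (σ : Equiv.Perm ℕ) : Prop := {n : ℕ | σ n ≠ n}.Finite

/-!
Take a countable π-system `D` generating `A` and let `𝒞` be the countable π-system of cylinders
of `A^ℕ` with sides in `D`. A cylinder whose coordinates lie below some `K` with `σ [0, K) = [0, K)`
is pulled back by `T^σ` to the cylinder with permuted sides, so the directing identity and row
exchangeability give `E ∏ₙ (T^σ)_*𝛍 (Cₙ) = E ∏ₙ 𝛍 (Cₙ)` for all `C₀, …, C_{N-1} ∈ 𝒞`.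
Enumerating `𝒞 = {e₀, e₁, …}`, the law of a random probability measure `μ` is the law of the
vector `(μ eₙ)ₙ` in the compact cube `[0,1]^ℕ`, which by Stone–Weierstrass is determined by its
moments; these are exactly the mixed moments above.
-/

open Set Filter

namespace ContinuousMap

variable {X : Type*} [TopologicalSpace X] [CompactSpace X] [MeasurableSpace X] [BorelSpace X]

noncomputable def integralCLM (μ : Measure X) [IsFiniteMeasure μ] : C(X, ℝ) →L[ℝ] ℝ :=
  L1.integralCLM.comp (ContinuousMap.toLp 1 μ ℝ)

lemma integralCLM_apply (μ : Measure X) [IsFiniteMeasure μ] (f : C(X, ℝ)) :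
    integralCLM μ f = ∫ x, f x ∂μ := by
  rw [integralCLM, ContinuousLinearMap.comp_apply, ← L1.integral_def, L1.integral_eq_integral]
  exact integral_congr_ae (ContinuousMap.coeFn_toLp μ f)

end ContinuousMap

theorem MeasureTheory.ext_of_forall_mem_closure_integral_eq_of_compact {X : Type*}
    [TopologicalSpace X] [CompactSpace X] [TopologicalSpace.PseudoMetrizableSpace X]
    [MeasurableSpace X] [BorelSpace X]
    {μ ν : Measure X} [IsFiniteMeasure μ] [IsFiniteMeasure ν] {s : Set C(X, ℝ)}
    (hsep : (Algebra.adjoin ℝ s).SeparatesPoints)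
    (h : ∀ f ∈ Submonoid.closure s, ∫ x, f x ∂μ = ∫ x, f x ∂ν) : μ = ν := by
  set L : C(X, ℝ) →L[ℝ] ℝ := ContinuousMap.integralCLM μ - ContinuousMap.integralCLM ν
  have hker : Subalgebra.toSubmodule (Algebra.adjoin ℝ s) ≤
      LinearMap.ker (L : C(X, ℝ) →ₗ[ℝ] ℝ) := by
    rw [Algebra.adjoin_eq_span, Submodule.span_le]
    intro f hf
    simp [L, ContinuousMap.integralCLM_apply, h f hf]
  have hdense : closure (Algebra.adjoin ℝ s : Set C(X, ℝ)) = univ := by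
    rw [← Subalgebra.topologicalClosure_coe,
      ContinuousMap.subalgebra_topologicalClosure_eq_top_of_separatesPoints _ hsep,
      Algebra.coe_top]
  refine ext_of_forall_integral_eq_of_IsFiniteMeasure fun f => ?_
  have := closure_minimal hker L.isClosed_ker (hdense ▸ mem_univ f.toContinuousMap)
  simpa [L, ContinuousMap.integralCLM_apply, sub_eq_zero] using this

section Cube

def cubeCoord (i : ℕ) : C(ℕ → unitInterval, ℝ) := ⟨fun x => x i, by fun_prop⟩

def cubeMonomials : Submonoid C(ℕ → unitInterval, ℝ) where
  carrier := {p | ∃ (N : ℕ) (k : ℕ → ℕ), p = ∏ n ∈ Finset.range N, cubeCoord (k n)}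
  one_mem' := ⟨0, id, by simp⟩
  mul_mem' := by
    rintro _ _ ⟨N₁, k₁, rfl⟩ ⟨N₂, k₂, rfl⟩
    refine ⟨N₁ + N₂, fun n => if n < N₁ then k₁ n else k₂ (n - N₁), ?_⟩
    rw [Finset.prod_range_add]
    congr 1 <;> refine Finset.prod_congr rfl fun n hn => ?_ <;> simp [Finset.mem_range.1 hn]

theorem cube_measure_ext_of_integral_prod_eq {μ ν : Measure (ℕ → unitInterval)}
    [IsFiniteMeasure μ] [IsFiniteMeasure ν]
    (h : ∀ (N : ℕ) (k : ℕ → ℕ),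
      ∫ x, ∏ n ∈ Finset.range N, (x (k n) : ℝ) ∂μ
        = ∫ x, ∏ n ∈ Finset.range N, (x (k n) : ℝ) ∂ν) :
    μ = ν := by
  refine ext_of_forall_mem_closure_integral_eq_of_compact (s := range cubeCoord)
    (fun x y hxy => ?_) fun p hp => ?_
  · obtain ⟨i, hi⟩ := Function.ne_iff.1 hxy
    exact ⟨cubeCoord i, ⟨cubeCoord i, Algebra.subset_adjoin ⟨i, rfl⟩, rfl⟩,
      fun h => hi (Subtype.ext h)⟩
  · have hmono : Submonoid.closure (range cubeCoord) ≤ cubeMonomials :=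
      Submonoid.closure_le.2 (by rintro _ ⟨i, rfl⟩; exact ⟨1, fun _ => i, by simp⟩)
    obtain ⟨N, k, rfl⟩ := hmono hp
    simpa [cubeCoord] using h N k

end Cube

section RandomMeasure

variable {Ω S : Type*} [MeasurableSpace Ω] [MeasurableSpace S]

namespace MeasureTheory.ProbabilityMeasure

def probVector (e : ℕ → Set S) (μ : ProbabilityMeasure S) : ℕ → unitInterval :=
  fun n => ⟨μ.toMeasure.real (e n), measureReal_nonneg, measureReal_le_one⟩

variable {e : ℕ → Set S}

lemma measurable_probVector (he : ∀ n, MeasurableSet (e n)) : Measurable (probVector e) :=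
  measurable_pi_lambda _ fun n => (ENNReal.measurable_toReal.comp
    ((Measure.measurable_coe (he n)).comp measurable_subtype_coe)).subtype_mk

lemma le_comap_probVector (hpi : IsPiSystem (range e))
    (hgen : MeasurableSpace.generateFrom (range e) = ‹MeasurableSpace S›) :
    (inferInstance : MeasurableSpace (ProbabilityMeasure S)) ≤
      .comap (probVector e) inferInstance := by
  refine Measurable.comap_le (m₁ := .comap (probVector e) inferInstance)
    (f := ProbabilityMeasure.toMeasure) ?_
  refine .measure_of_isPiSystem_of_isProbabilityMeasure hgen.symm hpi ?_
  rintro _ ⟨n, rfl⟩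
  have : (fun μ : ProbabilityMeasure S => μ.toMeasure (e n))
      = fun μ => ENNReal.ofReal (probVector e μ n) :=
    funext fun μ => (ofReal_measureReal (measure_ne_top _ _)).symm
  rw [this]
  exact ENNReal.measurable_ofReal.comp (measurable_subtype_coe.comp
    ((measurable_pi_apply n).comp (comap_measurable (probVector e))))

lemma ext_of_map_probVector_eq (hpi : IsPiSystem (range e))
    (hgen : MeasurableSpace.generateFrom (range e) = ‹MeasurableSpace S›)
    {ρ₁ ρ₂ : Measure (ProbabilityMeasure S)}
    (h : ρ₁.map (probVector e) = ρ₂.map (probVector e)) : ρ₁ = ρ₂ := by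
  have hv := measurable_probVector fun n =>
    hgen ▸ MeasurableSpace.measurableSet_generateFrom (mem_range_self n)
  ext T hT
  obtain ⟨U, hU, rfl⟩ := le_comap_probVector hpi hgen T hT
  rw [← Measure.map_apply hv hU, ← Measure.map_apply hv hU, h]

end MeasureTheory.ProbabilityMeasure

lemma integral_prod_measureReal (P : Measure Ω) {κ : Ω → Measure S} (hκ : Measurable κ)
    [∀ ω, IsFiniteMeasure (κ ω)] {s : ℕ → Set S} (hs : ∀ n, MeasurableSet (s n))
    (J : Finset ℕ) :
    ∫ ω, ∏ n ∈ J, (κ ω).real (s n) ∂P = (∫⁻ ω, ∏ n ∈ J, κ ω (s n) ∂P).toReal := by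
  simp_rw [measureReal_def, ← ENNReal.toReal_prod]
  exact integral_toReal
    (Finset.measurable_prod _ fun n _ => (Measure.measurable_coe (hs n)).comp hκ).aemeasurable
    (ae_of_all _ fun ω => ENNReal.prod_lt_top fun n _ => measure_lt_top _ _)

open MeasureTheory.ProbabilityMeasure in
theorem map_eq_of_lintegral_prod_eq (P : Measure Ω) [IsFiniteMeasure P] {κ η : Ω → Measure S}
    (hκ : Measurable κ) (hη : Measurable η)
    [∀ ω, IsProbabilityMeasure (κ ω)] [∀ ω, IsProbabilityMeasure (η ω)]
    {e : ℕ → Set S} (hpi : IsPiSystem (range e))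
    (hgen : MeasurableSpace.generateFrom (range e) = ‹MeasurableSpace S›)
    (H : ∀ (N : ℕ) (k : ℕ → ℕ),
      ∫⁻ ω, ∏ n ∈ Finset.range N, κ ω (e (k n)) ∂P
        = ∫⁻ ω, ∏ n ∈ Finset.range N, η ω (e (k n)) ∂P) :
    P.map κ = P.map η := by
  have he : ∀ n, MeasurableSet (e n) := fun n =>
    hgen ▸ MeasurableSpace.measurableSet_generateFrom (mem_range_self n)
  have hv := measurable_probVector he
  let κ' : Ω → ProbabilityMeasure S := fun ω => ⟨κ ω, inferInstance⟩
  let η' : Ω → ProbabilityMeasure S := fun ω => ⟨η ω, inferInstance⟩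
  have hκ' : Measurable κ' := hκ.subtype_mk
  have hη' : Measurable η' := hη.subtype_mk
  have hlaw : P.map κ' = P.map η' := by
    refine ext_of_map_probVector_eq hpi hgen ?_
    rw [Measure.map_map hv hκ', Measure.map_map hv hη']
    refine cube_measure_ext_of_integral_prod_eq fun N k => ?_
    have hmono : Continuous fun x : ℕ → unitInterval => ∏ n ∈ Finset.range N, (x (k n) : ℝ) := by
      fun_prop
    rw [integral_map (hv.comp hκ').aemeasurable hmono.aestronglyMeasurable,
      integral_map (hv.comp hη').aemeasurable hmono.aestronglyMeasurable]
    have := congrArg ENNReal.toReal (H N k)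
    rwa [← integral_prod_measureReal P hκ (fun n => he (k n)),
      ← integral_prod_measureReal P hη (fun n => he (k n))] at this
  calc P.map κ = (P.map κ').map ProbabilityMeasure.toMeasure :=
        (Measure.map_map measurable_subtype_coe hκ').symm
    _ = P.map η := by rw [hlaw]; exact Measure.map_map measurable_subtype_coe hη'

end RandomMeasure

section Cylinders

theorem MeasurableSpace.exists_countable_isPiSystem_generateFrom_eq {α : Type*}
    [m : MeasurableSpace α] [CountablyGenerated α] :
    ∃ D : Set (Set α), D.Countable ∧ IsPiSystem D ∧ univ ∈ D ∧ generateFrom D = m := by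
  classical
  set g := countableGeneratingSet α
  have : Countable g := countable_countableGeneratingSet.to_subtype
  refine ⟨range fun F : Finset g => ⋂ t ∈ F, (t : Set α), countable_range _, ?_, ⟨∅, by simp⟩,
    ?_⟩
  · rintro _ ⟨F₁, rfl⟩ _ ⟨F₂, rfl⟩ -
    exact ⟨F₁ ∪ F₂, Finset.set_biInter_inter _ _ _⟩
  · refine le_antisymm (generateFrom_le ?_) ?_
    · rintro _ ⟨F, rfl⟩
      exact Finset.measurableSet_biInter F fun t _ => measurableSet_countableGeneratingSet t.2
    · conv_lhs => rw [← generateFrom_countableGeneratingSet (α := α)]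
      exact generateFrom_mono fun t ht => ⟨{⟨t, ht⟩}, by simp⟩

variable {ι : Type*} {α : ι → Type*}

theorem univ_mem_squareCylinders {C : ∀ i, Set (Set (α i))} (hC : ∀ i, univ ∈ C i) :
    univ ∈ squareCylinders C :=
  ⟨∅, fun _ => univ, fun i _ => hC i, by simp⟩

theorem squareCylinders_mono {C D : ∀ i, Set (Set (α i))} (h : ∀ i, C i ⊆ D i) :
    squareCylinders C ⊆ squareCylinders D := by
  rintro _ ⟨s, t, ht, rfl⟩
  exact ⟨s, t, fun i _ => h i (ht i trivial), rfl⟩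

theorem countable_squareCylinders [Countable ι] {C : ∀ i, Set (Set (α i))}
    (hC : ∀ i, (C i).Countable) : (squareCylinders C).Countable := by
  classical
  have := fun i => (hC i).to_subtype
  rw [squareCylinders_eq_iUnion_image]
  refine countable_iUnion fun s => (countable_range fun t : ∀ i : s, C i =>
    (s : Set ι).pi fun i => if h : i ∈ s then (t ⟨i, h⟩ : Set (α i)) else univ).mono ?_
  rintro _ ⟨t, ht, rfl⟩
  exact ⟨fun i => ⟨t i, ht i trivial⟩,
    pi_congr rfl fun i hi => by simp [Finset.mem_coe.1 hi]⟩

theorem generateFrom_squareCylinders_of_generateFrom_eq [m : ∀ i, MeasurableSpace (α i)]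
    {C : ∀ i, Set (Set (α i))} (hgen : ∀ i, MeasurableSpace.generateFrom (C i) = m i)
    (huniv : ∀ i, univ ∈ C i) :
    MeasurableSpace.generateFrom (squareCylinders C) = MeasurableSpace.pi := by
  classical
  refine le_antisymm ?_ (iSup_le fun i => ?_)
  · rw [← generateFrom_squareCylinders]
    exact MeasurableSpace.generateFrom_mono (squareCylinders_mono fun i s hs =>
      show MeasurableSet s from hgen i ▸ MeasurableSpace.measurableSet_generateFrom hs)
  · rw [← hgen i, MeasurableSpace.comap_generateFrom]
    refine MeasurableSpace.generateFrom_mono ?_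
    rintro _ ⟨d, hd, rfl⟩
    refine ⟨{i}, Function.update (fun j => univ) i d, fun j _ => ?_, ?_⟩
    · rcases eq_or_ne j i with rfl | hj
      · simpa using hd
      · simpa [hj] using huniv j
    · simp [singleton_pi]

end Cylinders

lemma FinitelySupported.eventually_lt_iff {σ : Equiv.Perm ℕ} (hσ : FinitelySupported σ) :
    ∀ᶠ K in atTop, ∀ i, σ i < K ↔ i < K := by
  obtain ⟨B, hB⟩ := hσ.bddAbove
  filter_upwards [eventually_gt_atTop B] with K hK i
  by_cases hi : σ i = i
  · rw [hi]
  · have hσi : σ (σ i) ≠ σ i := fun h => hi (σ.injective h)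
    exact iff_of_true ((hB hσi).trans_lt hK) ((hB hi).trans_lt hK)

section InitialBoxes

variable {A : Type*}

def initialBox (K : ℕ) (t : ℕ → Set A) : Set (ℕ → A) := {y | ∀ i < K, y i ∈ t i}

lemma measurableSet_initialBox [MeasurableSpace A] (K : ℕ) {t : ℕ → Set A}
    (ht : ∀ i, MeasurableSet (t i)) : MeasurableSet (initialBox K t) := by
  simp only [initialBox, ofPred_forall]
  exact .iInter fun i => .iInter fun _ => measurable_pi_apply i (ht i)

lemma preimage_initialBox_perm {σ : Equiv.Perm ℕ} {K : ℕ} (hK : ∀ i, σ i < K ↔ i < K)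
    (t : ℕ → Set A) :
    (fun y i => y (σ i)) ⁻¹' initialBox K t = initialBox K fun i => t (σ.symm i) := by
  ext y
  simp only [initialBox, Set.mem_preimage, mem_ofPred_eq]
  refine ⟨fun h j hj => ?_, fun h i hi => ?_⟩
  · simpa using h (σ.symm j) ((hK _).1 (by simpa using hj))
  · simpa using h (σ i) ((hK i).2 hi)

lemma eventually_exists_initialBox_eq [MeasurableSpace A] {B : Set (ℕ → A)}
    (hB : B ∈ squareCylinders fun _ => {s : Set A | MeasurableSet s}) :
    ∀ᶠ K in atTop, ∃ t : ℕ → Set A, (∀ i, MeasurableSet (t i)) ∧ B = initialBox K t := by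
  classical
  obtain ⟨s, t, ht, rfl⟩ := hB
  obtain ⟨L, hL⟩ := s.bddAbove
  filter_upwards [eventually_gt_atTop L] with K hK
  refine ⟨fun i => if i ∈ s then t i else univ, fun i => ?_, ?_⟩
  · by_cases hi : i ∈ s
    · simpa [hi] using ht i trivial
    · simp [hi]
  · ext y
    simp only [initialBox, Set.mem_pi, Finset.mem_coe, mem_ofPred_eq, mem_ite_univ_right]
    exact ⟨fun h i _ hi => h i hi, fun h i hi => h i ((hL hi).trans_lt hK) hi⟩

end InitialBoxes

section RowExchangeability

variable {Ω A : Type*} [MeasurableSpace Ω] [MeasurableSpace A] {P : Measure Ω}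
  {X : Ω → ℕ → ℕ → A} {M : Ω → Measure (ℕ → A)} {σ : Equiv.Perm ℕ}

lemma lintegral_prod_initialBox_perm (hX : Measurable X)
    (hrow : P.map (fun ω i n => X ω (σ i) n) = P.map X)
    (hdirect : ∀ (N : ℕ) (s : ℕ → ℕ → Set A), (∀ n i, MeasurableSet (s n i)) →
      P {ω | ∀ n < N, ∀ i < N, X ω i n ∈ s n i}
        = ∫⁻ ω, ∏ n ∈ Finset.range N, M ω {y | ∀ i < N, y i ∈ s n i} ∂P)
    {K : ℕ} (hK : ∀ i, σ i < K ↔ i < K) {u : ℕ → ℕ → Set A}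
    (hu : ∀ n i, MeasurableSet (u n i)) :
    ∫⁻ ω, ∏ n ∈ Finset.range K, M ω (initialBox K fun i => u n (σ.symm i)) ∂P
      = ∫⁻ ω, ∏ n ∈ Finset.range K, M ω (initialBox K (u n)) ∂P := by
  set E : Set (ℕ → ℕ → A) := {z | ∀ n < K, ∀ i < K, z i n ∈ u n i}
  have hE : MeasurableSet E := by
    simp only [E, ofPred_forall]
    exact .iInter fun n => .iInter fun _ => .iInter fun i => .iInter fun _ =>
      (measurable_pi_apply n).comp (measurable_pi_apply i) (hu n i)
  have hXσ : Measurable fun ω i n => X ω (σ i) n := by fun_prop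
  calc _ = P {ω | ∀ n < K, ∀ i < K, X ω i n ∈ u n (σ.symm i)} :=
        (hdirect K _ fun n i => hu n _).symm
    _ = P ((fun ω i n => X ω (σ i) n) ⁻¹' E) := by
        congr 1
        ext ω
        refine forall₂_congr fun n _ => ?_
        exact (Set.ext_iff.1 (preimage_initialBox_perm hK (u n)) fun i => X ω i n).symm
    _ = P (X ⁻¹' E) := by rw [← Measure.map_apply hXσ hE, hrow, Measure.map_apply hX hE]
    _ = _ := hdirect K u hu

lemma lintegral_prod_map_perm [∀ ω, IsProbabilityMeasure (M ω)] (hX : Measurable X)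
    (hrow : P.map (fun ω i n => X ω (σ i) n) = P.map X)
    (hdirect : ∀ (N : ℕ) (s : ℕ → ℕ → Set A), (∀ n i, MeasurableSet (s n i)) →
      P {ω | ∀ n < N, ∀ i < N, X ω i n ∈ s n i}
        = ∫⁻ ω, ∏ n ∈ Finset.range N, M ω {y | ∀ i < N, y i ∈ s n i} ∂P)
    (hσ : FinitelySupported σ) (N : ℕ) {c : ℕ → Set (ℕ → A)}
    (hc : ∀ n, c n ∈ squareCylinders fun _ => {s : Set A | MeasurableSet s}) :
    ∫⁻ ω, ∏ n ∈ Finset.range N, (M ω).map (fun y i => y (σ i)) (c n) ∂P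
      = ∫⁻ ω, ∏ n ∈ Finset.range N, M ω (c n) ∂P := by
  have hT : Measurable fun (y : ℕ → A) i => y (σ i) := by fun_prop
  have : ∀ ω, IsProbabilityMeasure ((M ω).map fun y i => y (σ i)) :=
    fun ω => Measure.isProbabilityMeasure_map hT.aemeasurable
  obtain ⟨K, hNK, hK, hcK⟩ := ((eventually_ge_atTop N).and (hσ.eventually_lt_iff.and
    ((Finset.range N).eventually_all.2 fun n _ => eventually_exists_initialBox_eq (hc n)))).exists
  choose! t ht hct using hcK
  -- padded with `univ`, the `N` cylinders become `K` boxes of length `K`, the shape of `hdirect`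
  set u : ℕ → ℕ → Set A := fun n => if n < N then t n else fun _ => univ
  have hu : ∀ n i, MeasurableSet (u n i) := fun n i => by
    by_cases hn : n < N
    · simpa [u, hn] using ht n (Finset.mem_range.2 hn) i
    · simp [u, hn]
  have hpad : ∀ (μ : Measure (ℕ → A)) [IsProbabilityMeasure μ],
      ∏ n ∈ Finset.range N, μ (c n) = ∏ n ∈ Finset.range K, μ (initialBox K (u n)) := by
    intro μ _
    rw [← Finset.prod_subset (Finset.range_subset_range.2 hNK) fun n _ hn => ?_]
    · refine Finset.prod_congr rfl fun n hn => ?_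
      simp [u, Finset.mem_range.1 hn, ← hct n hn]
    · simp [u, Finset.mem_range.not.1 hn, initialBox]
  calc _ = ∫⁻ ω, ∏ n ∈ Finset.range K, (M ω).map (fun y i => y (σ i)) (initialBox K (u n)) ∂P :=
        by simp_rw [hpad]
    _ = ∫⁻ ω, ∏ n ∈ Finset.range K, M ω (initialBox K fun i => u n (σ.symm i)) ∂P := by
        simp_rw [Measure.map_apply hT (measurableSet_initialBox K (hu _)),
          preimage_initialBox_perm hK]
    _ = ∫⁻ ω, ∏ n ∈ Finset.range K, M ω (initialBox K (u n)) ∂P :=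
        lintegral_prod_initialBox_perm hX hrow hdirect hK hu
    _ = _ := by simp_rw [hpad]

end RowExchangeability

/-- The de Finetti directing measure of a row-column exchangeable array is an exchangeable
random measure: let `(X_{i,n})` be a row-column exchangeable array valued in a standard Borel
space `A`, viewed as an exchangeable sequence (in `n`) of `A^ℕ`-valued columns, and let `𝛍` be
its de Finetti directing random measure, so that the law of the array is `E[𝛍^{⊗ℕ}]` (expressed
below through cylinder sets).  Then `(T^σ)_* 𝛍` has the same law as `𝛍` for every finitely
supported permutation `σ`, where `T^σ` permutes the coordinates of `A^ℕ`. -/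
theorem directing_measure_of_RCE_is_ERM {Ω A : Type*} [MeasurableSpace Ω]
    [MeasurableSpace A] [StandardBorelSpace A]
    (P : Measure Ω) [IsProbabilityMeasure P]
    (X : Ω → ℕ → ℕ → A) (hX : Measurable X)
    (hRCE : ∀ σ τ, FinitelySupported σ → FinitelySupported τ →
      P.map (fun ω => fun i n => X ω (σ i) (τ n)) = P.map X)
    (M : Ω → Measure (ℕ → A)) (hM_meas : Measurable M)
    (hM_prob : ∀ ω, IsProbabilityMeasure (M ω))
    (hdirect : ∀ (N : ℕ) (s : ℕ → ℕ → Set A), (∀ n i, MeasurableSet (s n i)) →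
      P {ω | ∀ n < N, ∀ i < N, X ω i n ∈ s n i}
        = ∫⁻ ω, ∏ n ∈ Finset.range N, M ω {y | ∀ i < N, y i ∈ s n i} ∂P) :
    ∀ σ, FinitelySupported σ →
      P.map (fun ω => (M ω).map (fun x => fun i => x (σ i))) = P.map M := by
  intro σ hσ
  obtain ⟨D, hDc, hDpi, hDuniv, hDgen⟩ :=
    MeasurableSpace.exists_countable_isPiSystem_generateFrom_eq (α := A)
  obtain ⟨e, he⟩ := (countable_squareCylinders (C := fun _ : ℕ => D) fun _ => hDc)
    |>.exists_eq_range ⟨univ, univ_mem_squareCylinders fun _ => hDuniv⟩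
  have hT : Measurable fun (y : ℕ → A) i => y (σ i) := by fun_prop
  have : ∀ ω, IsProbabilityMeasure ((M ω).map fun y i => y (σ i)) :=
    fun ω => Measure.isProbabilityMeasure_map hT.aemeasurable
  refine map_eq_of_lintegral_prod_eq P ((Measure.measurable_map _ hT).comp hM_meas) hM_meas
    (he ▸ isPiSystem_squareCylinders (fun _ => hDpi) fun _ => hDuniv)
    (he ▸ generateFrom_squareCylinders_of_generateFrom_eq (fun _ => hDgen) fun _ => hDuniv)
    fun N k => ?_
  refine lintegral_prod_map_perm hX (hRCE σ 1 hσ (by simp [FinitelySupported])) hdirect hσ N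
    fun n => squareCylinders_mono (fun _ s hs => ?_) (he ▸ mem_range_self (k n))
  exact hDgen ▸ MeasurableSpace.measurableSet_generateFrom hs
end
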